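/- arXiv:1810.09169 — 5 statements merged into one kernel-verified Lean document; each statement's English description precedes it below -/
import Mathlib

section
/- Let a graph inverse semigroup G(E) be a dense subsemigroup of a Hausdorff CLP-compact topological semigroup S. Then for every open neighborhood U of 0 in S, the set of vertices e ∈ E⁰ through which a cycle passes and for which there exists a nonzero element uv⁻¹ ∈ G(E) \ U with r(u) = r(v) = e is finite. -/
/-! Preamble: graph inverse semigroups and compactness-type properties. -/

namespace GISPaper

variable {V E : Type*}

/-- `IsPathFrom src rng v l` means that the list of edges `l` is composable
and starts at the vertex `v`. -/
def IsPathFrom (src rng : E → V) : V → List E → Prop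
  | _, [] => True
  | v, e :: l => src e = v ∧ IsPathFrom src rng (rng e) l

/-- The end vertex of a list of edges starting at the vertex `v`. -/
def pathEnd (rng : E → V) : V → List E → V
  | v, [] => v
  | _, e :: l => pathEnd rng (rng e) l

theorem pathEnd_append (rng : E → V) (v : V) (l₁ l₂ : List E) :
    pathEnd rng v (l₁ ++ l₂) = pathEnd rng (pathEnd rng v l₁) l₂ := by
  induction l₁ generalizing v with
  | nil => rfl
  | cons e l ih => simpa [pathEnd] using ih (rng e)

theorem isPathFrom_append (src rng : E → V) (v : V) (l₁ l₂ : List E) :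
    IsPathFrom src rng v (l₁ ++ l₂) ↔
      IsPathFrom src rng v l₁ ∧ IsPathFrom src rng (pathEnd rng v l₁) l₂ := by
  induction l₁ generalizing v with
  | nil => simp [IsPathFrom, pathEnd]
  | cons e l ih => simp [IsPathFrom, pathEnd, ih (rng e), and_assoc]

/-- A (directed) path in the graph `(V, E, src, rng)`: a starting vertex together
with a composable list of edges (a path of length zero is just a vertex). -/
structure GPath (src rng : E → V) where
  start : V
  edges : List E
  isPath : IsPathFrom src rng start edges

/-- The range (end vertex) of a path. -/
def GPath.range {src rng : E → V} (p : GPath src rng) : V :=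
  pathEnd rng p.start p.edges

/-- The nonzero elements of the graph inverse semigroup: pairs `u v⁻¹` of paths
with `r u = r v`. -/
def GISElem (src rng : E → V) : Type _ :=
  {p : GPath src rng × GPath src rng // p.1.range = p.2.range}

/-- The graph inverse semigroup over the graph `(V, E, src, rng)`: the nonzero
elements `u v⁻¹` together with a zero element (represented by `none`). -/
def GIS (src rng : E → V) : Type _ := Option (GISElem src rng)

instance {src rng : E → V} : Zero (GIS src rng) :=
  ⟨(none : Option (GISElem src rng))⟩

open Classical in
/-- The multiplication of a graph inverse semigroup:
`u₁v₁⁻¹ · u₂v₂⁻¹ = u₁w v₂⁻¹` if `u₂ = v₁ w`, `u₁v₁⁻¹ · u₂v₂⁻¹ = u₁ (v₂ w)⁻¹` if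
`v₁ = u₂ w`, and `0` otherwise; `0` is absorbing. -/
noncomputable def GIS.mul {src rng : E → V} :
    Option (GISElem src rng) → Option (GISElem src rng) → Option (GISElem src rng)
  | some ⟨(u₁, v₁), h₁⟩, some ⟨(u₂, v₂), h₂⟩ =>
    if h : v₁.start = u₂.start ∧ v₁.edges <+: u₂.edges then
      some ⟨(⟨u₁.start, u₁.edges ++ u₂.edges.drop v₁.edges.length, by
        obtain ⟨hs, t, ht⟩ := h
        have hdrop : u₂.edges.drop v₁.edges.length = t := by
          rw [← ht, List.drop_left]
        have hu₂ := u₂.isPath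
        rw [← ht, isPathFrom_append] at hu₂
        rw [hdrop, isPathFrom_append]
        refine ⟨u₁.isPath, ?_⟩
        have he : pathEnd rng u₁.start u₁.edges = pathEnd rng u₂.start v₁.edges := by
          rw [← hs]; exact h₁
        rw [he]; exact hu₂.2⟩, v₂), by
        show pathEnd rng u₁.start (u₁.edges ++ u₂.edges.drop v₁.edges.length) = v₂.range
        obtain ⟨hs, t, ht⟩ := h
        have hdrop : u₂.edges.drop v₁.edges.length = t := by
          rw [← ht, List.drop_left]
        rw [hdrop, pathEnd_append]
        have he : pathEnd rng u₁.start u₁.edges = pathEnd rng u₂.start v₁.edges := by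
          rw [← hs]; exact h₁
        rw [he, ← pathEnd_append, ht]
        exact h₂⟩
    else if h' : u₂.start = v₁.start ∧ u₂.edges <+: v₁.edges then
      some ⟨(u₁, ⟨v₂.start, v₂.edges ++ v₁.edges.drop u₂.edges.length, by
        obtain ⟨hs, t, ht⟩ := h'
        have hdrop : v₁.edges.drop u₂.edges.length = t := by
          rw [← ht, List.drop_left]
        have hv₁ := v₁.isPath
        rw [← ht, isPathFrom_append] at hv₁
        rw [hdrop, isPathFrom_append]
        refine ⟨v₂.isPath, ?_⟩
        have he : pathEnd rng v₂.start v₂.edges = pathEnd rng v₁.start u₂.edges := by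
          rw [← hs]; exact h₂.symm
        rw [he]; exact hv₁.2⟩), by
        show u₁.range = pathEnd rng v₂.start (v₂.edges ++ v₁.edges.drop u₂.edges.length)
        obtain ⟨hs, t, ht⟩ := h'
        have hdrop : v₁.edges.drop u₂.edges.length = t := by
          rw [← ht, List.drop_left]
        have he : pathEnd rng v₂.start v₂.edges = pathEnd rng v₁.start u₂.edges := by
          rw [← hs]; exact h₂.symm
        rw [hdrop, pathEnd_append, he, ← pathEnd_append, ht]
        exact h₁⟩
    else none
  | _, _ => none

noncomputable instance {src rng : E → V} : Mul (GIS src rng) := ⟨GIS.mul⟩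

theorem GIS.zero_mul {src rng : E → V} (x : GIS src rng) : 0 * x = 0 := rfl

/-- The topology in which every nonzero point is isolated and the open
neighbourhoods of `0` are exactly the cofinite sets containing `0`. -/
def tauC (α : Type*) [Zero α] : TopologicalSpace α where
  IsOpen U := (0 : α) ∈ U → Uᶜ.Finite
  isOpen_univ := by simp
  isOpen_inter U W hU hW h := by
    rw [Set.compl_inter]
    exact (hU h.1).union (hW h.2)
  isOpen_sUnion 𝒮 h h0 := by
    obtain ⟨U, hU, hU0⟩ := h0
    exact (h U hU hU0).subset (Set.compl_subset_compl.mpr (Set.subset_sUnion_of_mem hU))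

/-- A topological space is CLP-compact if every cover by clopen sets has a
finite subcover. -/
def CLPCompact (X : Type*) [TopologicalSpace X] : Prop :=
  ∀ 𝒰 : Set (Set X), (∀ U ∈ 𝒰, IsClopen U) → ⋃₀ 𝒰 = Set.univ →
    ∃ ℱ ⊆ 𝒰, ℱ.Finite ∧ ⋃₀ ℱ = Set.univ

/-- A topological space is countably compact if every infinite subset has an
accumulation point. -/
def CountablyCompactSpace (X : Type*) [TopologicalSpace X] : Prop :=
  ∀ B : Set X, B.Infinite → ∃ x : X, AccPt x (Filter.principal B)

/-- A topological space is feebly compact if every locally finite family of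
nonempty open sets is finite. -/
def FeeblyCompact (X : Type*) [TopologicalSpace X] : Prop :=
  ∀ 𝒰 : Set (Set X), (∀ U ∈ 𝒰, IsOpen U ∧ U.Nonempty) →
    (∀ x : X, ∃ N ∈ nhds x, {U ∈ 𝒰 | (U ∩ N).Nonempty}.Finite) → 𝒰.Finite

/-- The multiplication of the bicyclic monoid on `ℕ × ℕ`. -/
def bicyclicMul (x y : ℕ × ℕ) : ℕ × ℕ :=
  (x.1 + y.1 - min x.2 y.1, x.2 + y.2 - min x.2 y.1)

/-- The multiplication of the semigroup of `X × X`-matrix units (with zero `none`). -/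
def matUnitsMul {X : Type*} [DecidableEq X] :
    Option (X × X) → Option (X × X) → Option (X × X)
  | some (a, b), some (c, d) => if b = c then some (a, d) else none
  | _, _ => none

/-- A cycle based at the vertex `e`: a path of nonzero length from `e` to `e`. -/
def HasCycleAt (src rng : E → V) (e : V) : Prop :=
  ∃ p : GPath src rng, p.edges ≠ [] ∧ p.start = e ∧ p.range = e

end GISPaper

/-!
A nonzero `u v⁻¹` such that a path `γ` of positive length starts at `r(u)` is an isolated point
of `S`: left multiplication by `uγ(uγ)⁻¹` and right multiplication by `vγ(vγ)⁻¹` both send it to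
`uγ(vγ)⁻¹ ≠ u v⁻¹`, a point away from `0`, while only finitely many elements of `G(E)` are sent by
both maps to something other than `0` or themselves. By CLP-compactness, infinitely many such
isolated points accumulate somewhere. For the vertex idempotents `e` at cycle vertices, which are
pairwise orthogonal, an accumulation point `y` satisfies `y y = 0`, so all but finitely many of
them lie in any neighbourhood of `0`. Since `u = u e` and `v⁻¹ = e v⁻¹` for `e = r(u) = r(v)`,
and `s 0 = 0 s = 0` in `S`, the same holds for the elements `u` and `v⁻¹`: near an accumulation
point `y` of the `u`, products `u' e'` with `e'` near `0` are near `y 0 = 0`. Choosing a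
neighbourhood `N` of `0` with `N N N ⊆ U` and writing `u v⁻¹ = u · e · v⁻¹` gives the theorem.
-/

namespace GISPaper

open Filter Topology Function

section Topology

variable {S α : Type*} [TopologicalSpace S]

theorem exists_mem_nhds_mul_mem [Mul S] [ContinuousMul S] {a : S} {W : Set S}
    (hW : W ∈ 𝓝 (a * a)) : ∃ N ∈ 𝓝 a, ∀ s ∈ N, ∀ t ∈ N, s * t ∈ W :=
  eventually_prod_self_iff.1 <| by
    rw [← nhds_prod_eq]
    exact (continuous_mul.tendsto (a, a)).eventually_mem hW

theorem exists_mem_nhds_mul_mul_mem [Mul S] [ContinuousMul S] {z : S} (hzz : z * z = z)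
    {U : Set S} (hU : U ∈ 𝓝 z) : ∃ N ∈ 𝓝 z, ∀ a ∈ N, ∀ b ∈ N, ∀ c ∈ N, a * b * c ∈ U := by
  obtain ⟨N₁, hN₁, h₁⟩ := exists_mem_nhds_mul_mem (hzz.symm ▸ hU)
  obtain ⟨N₂, hN₂, h₂⟩ := exists_mem_nhds_mul_mem (hzz.symm ▸ hN₁)
  exact ⟨N₁ ∩ N₂, inter_mem hN₁ hN₂, fun a ha b hb c hc => h₁ _ (h₂ _ ha.2 _ hb.2) _ hc.1⟩

theorem isOpen_singleton_of_finite_inter_dense [T1Space S] {D O : Set S} {x : S} (hD : Dense D)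
    (hO : IsOpen O) (hx : x ∈ O) (hfin : (O ∩ D).Finite) : IsOpen ({x} : Set S) := by
  have hO' : IsOpen (O \ ((O ∩ D) \ {x})) := hO.sdiff (hfin.sdiff (t := {x})).isClosed
  convert hO' using 1
  refine Eq.symm (Set.eq_singleton_iff_unique_mem.2 ⟨⟨hx, fun h => h.2 rfl⟩, fun s hs => ?_⟩)
  by_contra hsx
  obtain ⟨d, hdD, hdO', hdx⟩ := hD.exists_mem_open (hO'.sdiff isClosed_singleton) ⟨s, hs, hsx⟩
  exact hdO'.2 ⟨⟨hdO'.1, hdD⟩, hdx⟩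

theorem CLPCompact.exists_accPt [T1Space S] (hS : CLPCompact S) {X : Set S} (hX : X.Infinite)
    (hiso : ∀ x ∈ X, IsOpen ({x} : Set S)) : ∃ y, AccPt y (𝓟 X) := by
  by_contra! hacc
  have hXopen : IsOpen X := by simpa using isOpen_biUnion hiso
  have hXclosed : IsClosed X :=
    (isClosed_iff_derivedSet_subset X).2 fun y hy => absurd (mem_derivedSet.1 hy) (hacc y)
  obtain ⟨ℱ, hℱ, hℱfin, hcover⟩ := hS (insert Xᶜ ((fun x => {x}) '' X))
    (by
      rintro _ (rfl | ⟨x, hx, rfl⟩)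
      exacts [⟨hXopen.isClosed_compl, hXclosed.isOpen_compl⟩, ⟨isClosed_singleton, hiso x hx⟩])
    (Set.eq_univ_of_forall fun x => by
      by_cases hx : x ∈ X
      exacts [⟨{x}, Or.inr ⟨x, hx, rfl⟩, rfl⟩, ⟨Xᶜ, Or.inl rfl, hx⟩])
  refine hX ((Set.Finite.sUnion (hℱfin.sdiff (t := {Xᶜ})) fun W hW => ?_).subset fun x hx => ?_)
  · rcases hℱ hW.1 with rfl | ⟨x, -, rfl⟩
    exacts [absurd rfl hW.2, Set.finite_singleton x]
  · obtain ⟨W, hWℱ, hxW⟩ := hcover.symm ▸ Set.mem_univ x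
    exact ⟨W, ⟨hWℱ, by rintro rfl; exact hxW hx⟩, hxW⟩

theorem CLPCompact.exists_forall_infinite [T1Space S] (hS : CLPCompact S) {B : Set α} {x : α → S}
    (hB : B.Infinite) (hinj : Set.InjOn x B) (hiso : ∀ a ∈ B, IsOpen {x a}) :
    ∃ y, ∀ N ∈ 𝓝 y, {a ∈ B | x a ∈ N}.Infinite := by
  obtain ⟨y, hy⟩ := hS.exists_accPt (hB.image hinj) (Set.forall_mem_image.2 hiso)
  refine ⟨y, fun N hN => (Set.Infinite.of_accPt (hy.nhds_inter hN)).mono ?_ |>.of_image x⟩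
  rintro _ ⟨hN, a, ha, rfl⟩
  exact ⟨a, ⟨ha, hN⟩, rfl⟩

theorem CLPCompact.finite_setOf_notMem_of_orthogonal [T1Space S] [Mul S] [ContinuousMul S]
    (hS : CLPCompact S) {z : S} {M : Set α} {ε : α → S} (hinj : Set.InjOn ε M)
    (hiso : ∀ a ∈ M, IsOpen {ε a}) (hidem : ∀ a ∈ M, ε a * ε a = ε a)
    (horth : ∀ a ∈ M, ∀ b ∈ M, a ≠ b → ε a * ε b = z) {W : Set S} (hW : W ∈ 𝓝 z) :
    {a ∈ M | ε a ∉ W}.Finite := by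
  by_contra hB
  obtain ⟨y, hy⟩ := hS.exists_forall_infinite hB (hinj.mono (Set.sep_subset _ _))
    fun a ha => hiso a ha.1
  have hyy : y * y = z := by
    refine (specializes_iff_pure.2 fun N hN => ?_).eq.symm
    obtain ⟨N', hN', hmul⟩ := exists_mem_nhds_mul_mem hN
    obtain ⟨a, ha, b, hb, hab⟩ := (hy N' hN').nontrivial
    show z ∈ N
    rw [← horth a ha.1.1 b hb.1.1 hab]
    exact hmul _ ha.2 _ hb.2
  obtain ⟨N, hN, hmul⟩ := exists_mem_nhds_mul_mem (hyy ▸ hW)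
  obtain ⟨a, ha⟩ := (hy N hN).nonempty
  exact ha.1.2 (hidem a ha.1.1 ▸ hmul _ ha.2 _ ha.2)

theorem CLPCompact.finite_setOf_notMem_of_apply_eq [T1Space S] (hS : CLPCompact S)
    (f : S → S → S) (hf : Continuous (uncurry f)) {z : S} (hz : ∀ s, f s z = z) {M : Set α}
    {x ε : α → S} (hinj : Set.InjOn x M) (hiso : ∀ a ∈ M, IsOpen {x a})
    (hfix : ∀ a ∈ M, f (x a) (ε a) = x a) (hε : ∀ N ∈ 𝓝 z, {a ∈ M | ε a ∉ N}.Finite)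
    {W : Set S} (hW : W ∈ 𝓝 z) : {a ∈ M | x a ∉ W}.Finite := by
  by_contra hB
  obtain ⟨y, hy⟩ := hS.exists_forall_infinite hB (hinj.mono (Set.sep_subset _ _))
    fun a ha => hiso a ha.1
  obtain ⟨N₁, hN₁, N₂, hN₂, hprod⟩ := mem_nhds_prod_iff.1 <|
    hf.continuousAt.preimage_mem_nhds (x := (y, z)) (by rwa [uncurry_apply_pair, hz])
  obtain ⟨a, ⟨⟨haM, haW⟩, haN₁⟩, haε⟩ := ((hy N₁ hN₁).sdiff (hε N₂ hN₂)).nonempty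
  have haN₂ : ε a ∈ N₂ := by_contra fun h => haε ⟨haM, h⟩
  exact haW (hfix a haM ▸ hprod (Set.mk_mem_prod haN₁ haN₂))

end Topology

variable {V E : Type*} {src rng : E → V}

namespace GPath

def vertex (e : V) : GPath src rng := ⟨e, [], trivial⟩

theorem ext {p q : GPath src rng} (hs : p.start = q.start) (he : p.edges = q.edges) : p = q := by
  cases p; cases q; cases hs; cases he; rfl

def append (p q : GPath src rng) (h : p.range = q.start) : GPath src rng where
  start := p.start
  edges := p.edges ++ q.edges
  isPath := (isPathFrom_append src rng _ _ _).2
    ⟨p.isPath, (show pathEnd rng p.start p.edges = q.start from h) ▸ q.isPath⟩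

@[simp] theorem append_edges (p q : GPath src rng) (h) :
    (p.append q h).edges = p.edges ++ q.edges := rfl

@[simp] theorem append_range (p q : GPath src rng) (h) : (p.append q h).range = q.range := by
  rw [GPath.range, append_edges, pathEnd_append]
  exact congrArg (pathEnd rng · q.edges) h

theorem finite_setOf_isPrefix (s : V) (l : List E) :
    {p : GPath src rng | p.start = s ∧ p.edges <+: l}.Finite := by
  refine Set.Finite.of_finite_image (f := edges) (l.inits.finite_toSet.subset ?_) ?_
  · rintro _ ⟨p, ⟨-, hp⟩, rfl⟩
    exact (List.mem_inits _ _).2 hp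
  · exact fun p hp q hq h => ext (hp.1.trans hq.1.symm) h

end GPath

namespace GIS

-- `mk u v h` is the element `u v⁻¹`; a path `u` is identified with `u r(u)⁻¹`, and `v⁻¹` is
-- `r(v) v⁻¹`.
def mk (u v : GPath src rng) (h : u.range = v.range) : GIS src rng := some ⟨(u, v), h⟩

def vertexIdem (e : V) : GIS src rng := mk (.vertex e) (.vertex e) rfl

def ofPath (u : GPath src rng) : GIS src rng := mk u (.vertex u.range) rfl

def ofPathInv (v : GPath src rng) : GIS src rng := mk (.vertex v.range) v rfl

theorem mk_congr {u v u' v' : GPath src rng} {h : u.range = v.range} {h' : u'.range = v'.range}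
    (hu : u = u') (hv : v = v') : mk u v h = mk u' v' h' := by
  subst hu hv; rfl

theorem mul_zero (x : GIS src rng) : x * 0 = 0 := by
  obtain _ | _ := x <;> rfl

theorem mk_mul_mk_vertex (u v : GPath src rng) (e : V) (hu : u.range = e) (hv : v.range = e) :
    mk u (.vertex e) hu * mk (.vertex e) v hv.symm = mk u v (hu.trans hv.symm) := by
  show GIS.mul _ _ = _
  simp only [GIS.mul, mk, GPath.vertex, List.prefix_refl, and_self, dif_pos, List.length_nil,
    List.drop_nil, List.append_nil]

theorem vertexIdem_mul_self (e : V) : (vertexIdem e * vertexIdem e : GIS src rng) = vertexIdem e :=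
  mk_mul_mk_vertex _ _ e rfl rfl

theorem vertexIdem_mul_of_ne {a b : V} (h : a ≠ b) :
    (vertexIdem a * vertexIdem b : GIS src rng) = 0 := by
  show GIS.mul _ _ = _
  simp only [GIS.mul, vertexIdem, mk, GPath.vertex, h, h.symm, false_and, dif_neg,
    not_false_eq_true]
  rfl

theorem ofPath_mul_vertexIdem (u : GPath src rng) :
    ofPath u * vertexIdem u.range = ofPath u :=
  mk_mul_mk_vertex u (.vertex u.range) u.range rfl rfl

theorem vertexIdem_mul_ofPathInv (v : GPath src rng) :
    vertexIdem v.range * ofPathInv v = ofPathInv v :=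
  mk_mul_mk_vertex (.vertex v.range) v v.range rfl rfl

theorem ofPath_mul_vertexIdem_mul_ofPathInv (u v : GPath src rng) (h : u.range = v.range) :
    ofPath u * vertexIdem u.range * ofPathInv v = mk u v h := by
  rw [ofPath_mul_vertexIdem]
  show GIS.mul _ _ = _
  simp only [GIS.mul, ofPath, ofPathInv, mk, GPath.vertex, List.prefix_refl, h, and_self, dif_pos,
    List.length_nil, List.drop_nil, List.append_nil]

theorem ofPath_injective : Injective (ofPath : GPath src rng → GIS src rng) :=
  fun _ _ h => congrArg (fun g : GISElem src rng => g.1.1) (Option.some.inj h)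

theorem vertexIdem_injective : Injective (vertexIdem : V → GIS src rng) :=
  fun _ _ h => congrArg (fun g : GISElem src rng => g.1.1.start) (Option.some.inj h)

theorem ofPathInv_injective : Injective (ofPathInv : GPath src rng → GIS src rng) :=
  fun _ _ h => congrArg (fun g : GISElem src rng => g.1.2) (Option.some.inj h)

theorem mk_append_self_mul_mk (u v γ : GPath src rng) (h : u.range = v.range)
    (hu : u.range = γ.start) (hv : v.range = γ.start) (hγ : γ.edges ≠ []) :
    mk (u.append γ hu) (u.append γ hu) rfl * mk u v h =
      mk (u.append γ hu) (v.append γ hv) (by simp) := by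
  have hnp : ¬ u.edges ++ γ.edges <+: u.edges := fun hp => hγ <| by
    simpa using hp.length_le
  show GIS.mul _ _ = _
  simp only [GIS.mul, mk]
  rw [dif_neg (fun h => hnp h.2), dif_pos ⟨rfl, List.prefix_append _ _⟩]
  exact mk_congr rfl (GPath.ext rfl (by simp))

theorem mk_mul_mk_append_self (u v γ : GPath src rng) (h : u.range = v.range)
    (hu : u.range = γ.start) (hv : v.range = γ.start) :
    mk u v h * mk (v.append γ hv) (v.append γ hv) rfl =
      mk (u.append γ hu) (v.append γ hv) (by simp) := by
  show GIS.mul _ _ = _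
  simp only [GIS.mul, mk]
  rw [dif_pos ⟨rfl, List.prefix_append _ _⟩]
  exact mk_congr (GPath.ext rfl (by simp)) rfl

theorem isPrefix_of_mk_self_mul (d u v : GPath src rng) (h : u.range = v.range)
    (h₀ : mk d d rfl * mk u v h ≠ 0) (hg : mk d d rfl * mk u v h ≠ mk u v h) :
    u.start = d.start ∧ u.edges <+: d.edges := by
  simp only [HMul.hMul, Mul.mul, GIS.mul, mk] at h₀ hg
  split_ifs at h₀ hg with hc₁ hc₂
  · exact (hg (mk_congr (GPath.ext hc₁.1 (List.prefix_iff_eq_append.1 hc₁.2)) rfl)).elim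
  · exact hc₂
  · exact absurd rfl h₀

theorem isPrefix_of_mul_mk_self (d u v : GPath src rng) (h : u.range = v.range)
    (h₀ : mk u v h * mk d d rfl ≠ 0) (hg : mk u v h * mk d d rfl ≠ mk u v h) :
    v.start = d.start ∧ v.edges <+: d.edges := by
  simp only [HMul.hMul, Mul.mul, GIS.mul, mk] at h₀ hg
  split_ifs at h₀ hg with hc₁ hc₂
  · exact hc₁
  · exact (hg (mk_congr rfl (GPath.ext hc₂.1 (List.prefix_iff_eq_append.1 hc₂.2)))).elim
  · exact absurd rfl h₀

theorem finite_setOf_mul_ne (d d' : GPath src rng) :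
    {g : GIS src rng | mk d d rfl * g ∉ ({0, g} : Set _) ∧
      g * mk d' d' rfl ∉ ({0, g} : Set _)}.Finite := by
  have hfin : {p : GISElem src rng | p.1 ∈
      {u : GPath src rng | u.start = d.start ∧ u.edges <+: d.edges} ×ˢ
        {v : GPath src rng | v.start = d'.start ∧ v.edges <+: d'.edges}}.Finite :=
    ((GPath.finite_setOf_isPrefix _ _).prod (GPath.finite_setOf_isPrefix _ _)).preimage
      Subtype.val_injective.injOn
  refine (hfin.image some).subset ?_
  rintro (_ | ⟨⟨u, v⟩, h⟩) ⟨hl, hr⟩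
  · exact absurd (Or.inl (mul_zero _)) hl
  · simp only [Set.mem_insert_iff, not_or] at hl hr
    exact ⟨⟨(u, v), h⟩, ⟨isPrefix_of_mk_self_mul d u v h hl.1 hl.2,
      isPrefix_of_mul_mk_self d' u v h hr.1 hr.2⟩, rfl⟩

end GIS

variable {S : Type*} [TopologicalSpace S] [Mul S]

structure IsDenseSubsemigroup (ι : GIS src rng → S) : Prop where
  injective : Injective ι
  map_mul : ∀ x y, ι (x * y) = ι x * ι y
  denseRange : DenseRange ι

namespace IsDenseSubsemigroup

variable [T2Space S] [ContinuousMul S] {ι : GIS src rng → S}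

theorem zero_mul (hι : IsDenseSubsemigroup ι) (s : S) : ι 0 * s = ι 0 :=
  hι.denseRange.induction_on s (isClosed_eq (continuous_const_mul _) continuous_const)
    fun g => by rw [← hι.map_mul, GIS.zero_mul]

theorem mul_zero (hι : IsDenseSubsemigroup ι) (s : S) : s * ι 0 = ι 0 :=
  hι.denseRange.induction_on s (isClosed_eq (continuous_mul_const _) continuous_const)
    fun g => by rw [← hι.map_mul, GIS.mul_zero]

theorem isOpen_singleton (hι : IsDenseSubsemigroup ι) {u v γ : GPath src rng}
    (h : u.range = v.range) (hu : u.range = γ.start) (hγ : γ.edges ≠ []) :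
    IsOpen {ι (GIS.mk u v h)} := by
  have hv : v.range = γ.start := h ▸ hu
  set u' := u.append γ hu
  set v' := v.append γ hv
  have hw : u'.range = v'.range := by simp [u', v']
  have hne : ι (GIS.mk u v h) ≠ ι (GIS.mk u' v' hw) := fun heq => hγ <| by
    simpa [u'] using congrArg (fun g : GISElem src rng => g.1.1.edges)
      (Option.some.inj (hι.injective heq))
  have hne₀ : ι (GIS.mk u' v' hw) ≠ ι 0 := fun heq => Option.some_ne_none _ (hι.injective heq)
  obtain ⟨A, B, hA, hB, hxA, hwB, hAB⟩ := t2_separation hne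
  have hsep : ∀ g y, ι g ∈ A → ι y ∈ B \ {ι 0} → y ∉ ({0, g} : Set (GIS src rng)) := by
    rintro g y hg ⟨hyB, hy0⟩ (rfl | rfl)
    exacts [hy0 rfl, Set.disjoint_left.1 hAB hg hyB]
  have hB' : IsOpen (B \ {ι 0}) := hB.sdiff isClosed_singleton
  refine isOpen_singleton_of_finite_inter_dense hι.denseRange
    (O := A ∩ (ι (GIS.mk u' u' rfl) * ·) ⁻¹' (B \ {ι 0}) ∩
      (· * ι (GIS.mk v' v' rfl)) ⁻¹' (B \ {ι 0}))
    ((hA.inter (hB'.preimage (continuous_const_mul _))).inter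
      (hB'.preimage (continuous_mul_const _)))
    ⟨⟨hxA, ?_⟩, ?_⟩ (((GIS.finite_setOf_mul_ne u' v').image ι).subset ?_)
  · rw [Set.mem_preimage, ← hι.map_mul, GIS.mk_append_self_mul_mk u v γ h hu hv hγ]
    exact ⟨hwB, hne₀⟩
  · rw [Set.mem_preimage, ← hι.map_mul, GIS.mk_mul_mk_append_self u v γ h hu hv]
    exact ⟨hwB, hne₀⟩
  · rintro _ ⟨⟨⟨hgA, hl⟩, hr⟩, g, rfl⟩
    exact ⟨g, ⟨hsep g _ hgA (by rwa [hι.map_mul]), hsep g _ hgA (by rwa [hι.map_mul])⟩, rfl⟩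

theorem finite_setOf_vertexIdem_notMem (hι : IsDenseSubsemigroup ι) (hS : CLPCompact S)
    {W : Set S} (hW : W ∈ 𝓝 (ι 0)) :
    {e | HasCycleAt src rng e ∧ ι (GIS.vertexIdem e) ∉ W}.Finite :=
  hS.finite_setOf_notMem_of_orthogonal (M := {e | HasCycleAt src rng e})
    (fun _ _ _ _ hab => GIS.vertexIdem_injective (hι.injective hab))
    (fun e he => by
      obtain ⟨γ, hγ, hγs, -⟩ := he
      exact hι.isOpen_singleton rfl hγs.symm hγ)
    (fun _ _ => by rw [← hι.map_mul, GIS.vertexIdem_mul_self])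
    (fun _ _ _ _ hab => by rw [← hι.map_mul, GIS.vertexIdem_mul_of_ne hab]) hW

theorem finite_setOf_ofPath_notMem (hι : IsDenseSubsemigroup ι) (hS : CLPCompact S) {M : Set V}
    (hM : ∀ e ∈ M, HasCycleAt src rng e) (u : V → GPath src rng) (hu : ∀ e ∈ M, (u e).range = e)
    {W : Set S} (hW : W ∈ 𝓝 (ι 0)) : {e ∈ M | ι (GIS.ofPath (u e)) ∉ W}.Finite :=
  hS.finite_setOf_notMem_of_apply_eq (· * ·) continuous_mul hι.mul_zero
    (ε := fun e => ι (GIS.vertexIdem e))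
    (fun a ha b hb hab => (hu a ha).symm.trans <|
      (congrArg GPath.range (GIS.ofPath_injective (hι.injective hab))).trans (hu b hb))
    (fun e he => by
      obtain ⟨γ, hγ, hγs, -⟩ := hM e he
      exact hι.isOpen_singleton (u := u e) (v := .vertex _) rfl ((hu e he).trans hγs.symm) hγ)
    (fun e he => by
      have := GIS.ofPath_mul_vertexIdem (u e)
      rw [hu e he] at this
      rw [← hι.map_mul, this])
    (fun _ hN => (hι.finite_setOf_vertexIdem_notMem hS hN).subset fun e he => ⟨hM e he.1, he.2⟩) hW

theorem finite_setOf_ofPathInv_notMem (hι : IsDenseSubsemigroup ι) (hS : CLPCompact S)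
    {M : Set V} (hM : ∀ e ∈ M, HasCycleAt src rng e) (v : V → GPath src rng)
    (hv : ∀ e ∈ M, (v e).range = e) {W : Set S} (hW : W ∈ 𝓝 (ι 0)) :
    {e ∈ M | ι (GIS.ofPathInv (v e)) ∉ W}.Finite :=
  hS.finite_setOf_notMem_of_apply_eq (fun a b => b * a) (continuous_snd.mul continuous_fst)
    hι.zero_mul (ε := fun e => ι (GIS.vertexIdem e))
    (fun a ha b hb hab => (hv a ha).symm.trans <|
      (congrArg GPath.range (GIS.ofPathInv_injective (hι.injective hab))).trans (hv b hb))
    (fun e he => by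
      obtain ⟨γ, hγ, hγs, -⟩ := hM e he
      exact hι.isOpen_singleton (u := .vertex _) (v := v e) rfl ((hv e he).trans hγs.symm) hγ)
    (fun e he => by
      have := GIS.vertexIdem_mul_ofPathInv (v e)
      rw [hv e he] at this
      rw [← hι.map_mul, this])
    (fun _ hN => (hι.finite_setOf_vertexIdem_notMem hS hN).subset fun e he => ⟨hM e he.1, he.2⟩) hW

end IsDenseSubsemigroup

end GISPaper

open GISPaper in
theorem statement8_general {V E : Type*} (src rng : E → V)
    {S : Type*} [TopologicalSpace S] [T2Space S] [Mul S]
    (hSmul : Continuous (fun p : S × S => p.1 * p.2))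
    (hCLP : CLPCompact S)
    (ι : GIS src rng → S) (hinj : Function.Injective ι)
    (hhom : ∀ x y : GIS src rng, ι (x * y) = ι x * ι y)
    (hdense : DenseRange ι) :
    ∀ U : Set S, IsOpen U → ι 0 ∈ U →
      {e : V | HasCycleAt src rng e ∧
        ∃ p : GISElem src rng, p.1.1.range = e ∧ ι (some p) ∉ U}.Finite := by
  intro U hU h0
  have : ContinuousMul S := ⟨hSmul⟩
  have hι : IsDenseSubsemigroup ι := ⟨hinj, hhom, hdense⟩
  obtain ⟨N, hN, hNNN⟩ := exists_mem_nhds_mul_mul_mem (hι.zero_mul _) (hU.mem_nhds h0)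
  set R := {e : V | HasCycleAt src rng e ∧
    ∃ p : GISElem src rng, p.1.1.range = e ∧ ι (some p) ∉ U}
  have hwit (e : V) : ∃ p : GISElem src rng, e ∈ R → p.1.1.range = e ∧ ι (some p) ∉ U := by
    by_cases he : e ∈ R
    · obtain ⟨-, p, hp⟩ := he
      exact ⟨p, fun _ => hp⟩
    · exact ⟨⟨(.vertex e, .vertex e), rfl⟩, fun h => absurd h he⟩
  choose p hp using hwit
  have hR : ∀ e ∈ R, HasCycleAt src rng e := fun e he => he.1
  have hF₁ := hι.finite_setOf_ofPath_notMem hCLP hR (fun e => (p e).1.1)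
    (fun e he => (hp e he).1) hN
  have hF₂ := hι.finite_setOf_vertexIdem_notMem hCLP hN
  have hF₃ := hι.finite_setOf_ofPathInv_notMem hCLP hR (fun e => (p e).1.2)
    (fun e he => (p e).2.symm.trans (hp e he).1) hN
  refine ((hF₁.union hF₂).union hF₃).subset fun e he => ?_
  by_contra hcon
  have h₁ : ι (GIS.ofPath (p e).1.1) ∈ N := by_contra fun h => hcon (.inl (.inl ⟨he, h⟩))
  have h₂ : ι (GIS.vertexIdem e) ∈ N := by_contra fun h => hcon (.inl (.inr ⟨he.1, h⟩))
  have h₃ : ι (GIS.ofPathInv (p e).1.2) ∈ N := by_contra fun h => hcon (.inr ⟨he, h⟩)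
  apply (hp e he).2
  show ι (GIS.mk _ _ (p e).2) ∈ U
  rw [← GIS.ofPath_mul_vertexIdem_mul_ofPathInv, hι.map_mul, hι.map_mul, (hp e he).1]
  exact hNNN _ h₁ _ h₂ _ h₃

open GISPaper in
/-- Let a graph inverse semigroup `G(E)` be a dense subsemigroup of a
Hausdorff CLP-compact topological semigroup `S`. Then for every open neighborhood `U`
of `0` in `S`, the set of vertices `e` through which a cycle passes and for which some
nonzero `uv⁻¹ ∈ G(E) \ U` has `r(u) = r(v) = e` is finite. -/
theorem statement8 {V E : Type*} (src rng : E → V)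
    {S : Type*} [TopologicalSpace S] [T2Space S] [Mul S]
    (hassoc : ∀ a b c : S, a * b * c = a * (b * c))
    (hSmul : Continuous (fun p : S × S => p.1 * p.2))
    (hCLP : CLPCompact S)
    (ι : GIS src rng → S) (hinj : Function.Injective ι)
    (hhom : ∀ x y : GIS src rng, ι (x * y) = ι x * ι y)
    (hdense : DenseRange ι) :
    ∀ U : Set S, IsOpen U → ι 0 ∈ U →
      {e : V | HasCycleAt src rng e ∧
        ∃ p : GISElem src rng, p.1.1.range = e ∧ ι (some p) ∉ U}.Finite :=
  statement8_general src rng hSmul hCLP ι hinj hhom hdense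
end

section
/- Let E be an acyclic directed graph and let G(E) be a dense subsemigroup of a Hausdorff topological semigroup S. Then every element s ∈ S with s·s ≠ s satisfies s·s = 0, where 0 is the zero element of G(E). -/
/-! Preamble: graph inverse semigroups and compactness-type properties. -/

namespace GISPaper

variable {V E : Type*}

theorem GPath.ext' {src rng : E → V} {p q : GPath src rng}
    (h1 : p.start = q.start) (h2 : p.edges = q.edges) : p = q := by
  cases p; cases q; cases h1; cases h2; rfl

/-- In an acyclic graph, a prefix relation between paths with the same start and
range forces equality of the edge lists. -/
theorem prefix_eq_of_acyclic {src rng : E → V}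
    (hacyc : ∀ p : GPath src rng, p.edges ≠ [] → p.start ≠ p.range)
    (u v : GPath src rng) (hr : u.range = v.range) (hs : v.start = u.start)
    (hpre : v.edges <+: u.edges) : v.edges = u.edges := by
  obtain ⟨t, ht⟩ := hpre
  have hu := u.isPath
  rw [← ht, isPathFrom_append] at hu
  have htnil : t = [] := by
    by_contra htne
    have hrange : pathEnd rng (pathEnd rng u.start v.edges) t
        = pathEnd rng u.start v.edges := by
      rw [← pathEnd_append, ht]
      show u.range = _
      rw [hr]
      show pathEnd rng v.start v.edges = _
      rw [hs]
    exact hacyc ⟨pathEnd rng u.start v.edges, t, hu.2⟩ htne hrange.symm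
  rw [← ht, htnil, List.append_nil]

/-- In an acyclic graph, every element of the graph inverse semigroup squares to
itself or to zero. -/
theorem GIS.sq_eq_self_or_zero {src rng : E → V}
    (hacyc : ∀ p : GPath src rng, p.edges ≠ [] → p.start ≠ p.range)
    (g : GIS src rng) : g * g = g ∨ g * g = 0 := by
  cases g with
  | none => exact Or.inr rfl
  | some p =>
    obtain ⟨⟨u, v⟩, h⟩ := p
    by_cases c1 : v.start = u.start ∧ v.edges <+: u.edges
    · left
      have heq : v.edges = u.edges := prefix_eq_of_acyclic hacyc u v h c1.1 c1.2
      show GIS.mul (some ⟨(u, v), h⟩) (some ⟨(u, v), h⟩) = some ⟨(u, v), h⟩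
      rw [GIS.mul, dif_pos c1]
      refine congrArg some (Subtype.ext (Prod.ext ?_ rfl))
      exact GPath.ext' rfl (by simp [heq])
    · right
      have c2 : ¬ (u.start = v.start ∧ u.edges <+: v.edges) := by
        rintro ⟨hs, hpre⟩
        have heq : u.edges = v.edges := prefix_eq_of_acyclic hacyc v u h.symm hs hpre
        exact c1 ⟨hs.symm, heq ▸ List.prefix_refl _⟩
      show GIS.mul (some ⟨(u, v), h⟩) (some ⟨(u, v), h⟩) = none
      rw [GIS.mul, dif_neg c1, dif_neg c2]

end GISPaper

open GISPaper in
/-- Let `E` be an acyclic graph and `G(E)` a dense subsemigroup of a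
Hausdorff topological semigroup `S`. Then every `s ∈ S` with `s·s ≠ s` satisfies
`s·s = 0`, where `0` is the zero of `G(E)`. -/
theorem statement10 {V E : Type*} (src rng : E → V)
    (hacyc : ∀ p : GPath src rng, p.edges ≠ [] → p.start ≠ p.range)
    {S : Type*} [TopologicalSpace S] [T2Space S] [Mul S]
    (hassoc : ∀ a b c : S, a * b * c = a * (b * c))
    (hSmul : Continuous (fun p : S × S => p.1 * p.2))
    (ι : GIS src rng → S) (hinj : Function.Injective ι)
    (hhom : ∀ x y : GIS src rng, ι (x * y) = ι x * ι y)
    (hdense : DenseRange ι) :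
    ∀ s : S, s * s ≠ s → s * s = ι 0 := by
  intro s hs
  have hsqcont : Continuous fun x : S => x * x :=
    hSmul.comp (continuous_id.prodMk continuous_id)
  have hC1 : IsClosed {x : S | x * x = x} := isClosed_eq hsqcont continuous_id
  have hC2 : IsClosed {x : S | x * x = ι 0} := isClosed_eq hsqcont continuous_const
  have hsub : Set.range ι ⊆ {x : S | x * x = x} ∪ {x : S | x * x = ι 0} := by
    rintro _ ⟨g, rfl⟩
    rcases GIS.sq_eq_self_or_zero hacyc g with h | h
    · exact Or.inl (by simp only [Set.mem_setOf_eq]; rw [← hhom, h])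
    · exact Or.inr (by simp only [Set.mem_setOf_eq]; rw [← hhom, h])
  have := closure_minimal hsub (hC1.union hC2) (hdense s)
  rcases this with h | h
  · exact absurd h hs
  · exact h
end

section
/- Let τ be a Hausdorff topology on G(T) making the multiplication separately continuous. If there exists k ∈ ℕ such that 0 is not an accumulation point of the set L_k* = {(k,k,m) : m ≥ k}, then for every n ∈ ℕ, 0 is not an accumulation point of L_n*. -/
namespace GISPaper

/-- The nonzero elements of the graph inverse semigroup `G(T)` over the unary tree `T`:
the triple `(n, k, m)` with `n ≤ m` and `k ≤ m` represents the element `(n,m)(k,m)⁻¹`,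
where `(i,j)` is the unique path of `T` from `i` to `j`. -/
def GTElem : Type := {t : ℕ × ℕ × ℕ // t.1 ≤ t.2.2 ∧ t.2.1 ≤ t.2.2}

/-- The graph inverse semigroup over the unary tree (zero is `none`). -/
def GT : Type := Option GTElem

instance : Zero GT := ⟨(none : Option GTElem)⟩

/-- Multiplication of `G(T)`: `(n,k,m)·(n',k',m') = (n,k',max m m')` if `k = n'`,
and `0` otherwise; `0` is absorbing. -/
def GT.mul : Option GTElem → Option GTElem → Option GTElem
  | some ⟨(n, k, m), h⟩, some ⟨(n', k', m'), h'⟩ =>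
    if k = n' then
      some ⟨(n, k', max m m'),
        ⟨le_trans h.1 (le_max_left m m'), le_trans h'.2 (le_max_right m m')⟩⟩
    else none
  | _, _ => none

instance : Mul GT := ⟨GT.mul⟩

/-- `L_n^* = {(n,n,m) : m ≥ n}`, the maximal chain of nonzero idempotents at `n`. -/
def Lstar (n : ℕ) : Set GT :=
  {x | ∃ p : GTElem, x = some p ∧ p.1.1 = n ∧ p.1.2.1 = n}

/-- `L_n = L_n^* ∪ {0}`. -/
def L (n : ℕ) : Set GT := insert 0 (Lstar n)

end GISPaper

/-! With `M = max k n`, the map `x ↦ (k,n,M) · x · (n,k,M)` is continuous, fixes `0` and sends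
`L_n^*` into `L_k^*`, which avoids `0`; so it transports accumulation at `0` from `L_n^*` to
`L_k^*`. -/

theorem AccPt.of_mapsTo {X Y : Type*} [TopologicalSpace X] [TopologicalSpace Y]
    {f : X → Y} {x : X} {s : Set X} {t : Set Y} (h : AccPt x (Filter.principal s))
    (hf : ContinuousAt f x) (hst : Set.MapsTo f s t) (hx : f x ∉ t) :
    AccPt (f x) (Filter.principal t) :=
  (clusterPt_principal.1 <|
    h.clusterPt.map hf (Filter.tendsto_principal_principal.2 hst)).resolve_left hx

namespace GISPaper

theorem GT.zero_mul (x : GT) : 0 * x = 0 := rfl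

theorem GT.mul_zero (x : GT) : x * 0 = 0 := by
  rcases x with _ | ⟨⟨_, _, _⟩, _⟩ <;> rfl

theorem zero_notMem_Lstar (n : ℕ) : (0 : GT) ∉ Lstar n := by
  rintro ⟨p, hp, -⟩
  exact Option.some_ne_none p hp.symm

def GT.link (n k : ℕ) : GT :=
  some ⟨(n, k, max n k), le_max_left n k, le_max_right n k⟩

theorem GT.link_mul_mul_link_mem_Lstar {n k : ℕ} {x : GT} (hx : x ∈ Lstar n) :
    GT.link k n * (x * GT.link n k) ∈ Lstar k := by
  obtain ⟨⟨⟨n₁, n₂, m⟩, _⟩, rfl, h₁ : n₁ = n, h₂ : n₂ = n⟩ := hx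
  have hk : k ≤ max (max k n) (max m (max n k)) := (le_max_left _ _).trans (le_max_left _ _)
  refine ⟨⟨(k, k, max (max k n) (max m (max n k))), hk, hk⟩, ?_, rfl, rfl⟩
  show GT.mul _ (GT.mul _ _) = _
  simp [GT.link, GT.mul, h₁, h₂]

end GISPaper

open GISPaper in
theorem statement13_general (τ : TopologicalSpace GT)
    (hsep : ∀ a : GT,
      @Continuous _ _ τ τ (fun x => a * x) ∧ @Continuous _ _ τ τ (fun x => x * a))
    (k : ℕ) (hk : ¬ @AccPt GT τ 0 (Filter.principal (Lstar k))) :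
    ∀ n : ℕ, ¬ @AccPt GT τ 0 (Filter.principal (Lstar n)) := by
  let _ : TopologicalSpace GT := τ
  intro n hn
  let f : GT → GT := fun x => GT.link k n * (x * GT.link n k)
  have hf0 : f 0 = 0 := by simp only [f, GT.zero_mul, GT.mul_zero]
  have hfc : Continuous f := (hsep _).1.comp (hsep _).2
  have := hn.of_mapsTo hfc.continuousAt (fun _ => GT.link_mul_mul_link_mem_Lstar)
    (hf0 ▸ zero_notMem_Lstar k)
  exact hk (hf0 ▸ this)

open GISPaper in
/-- Let `τ` be a Hausdorff topology on `G(T)` making the multiplication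
separately continuous. If `0` is not an accumulation point of `L_k^*` for some `k`,
then `0` is not an accumulation point of `L_n^*` for every `n`. -/
theorem statement13 (τ : TopologicalSpace GT) (hT2 : @T2Space GT τ)
    (hsep : ∀ a : GT,
      @Continuous _ _ τ τ (fun x => a * x) ∧ @Continuous _ _ τ τ (fun x => x * a))
    (k : ℕ) (hk : ¬ @AccPt GT τ 0 (Filter.principal (Lstar k))) :
    ∀ n : ℕ, ¬ @AccPt GT τ 0 (Filter.principal (Lstar n)) :=
  statement13_general τ hsep k hk
end

section
/- Let G(T) be a dense subsemigroup of a Hausdorff CLP-compact topological semigroup S. Then for every open neighborhood U of 0 in S there exists n ∈ ℕ such that L_k ⊆ U for every k > n. -/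
/-! Identify `G(T)` with its image in `S` and suppose the conclusion fails. Then for infinitely
many `k` some idempotent `e_k = (k,k,m_k)` lies outside `U`, and these idempotents are pairwise
orthogonal: `e_k e_l = 0` for `k ≠ l`.

Every `e = (k,k,m)` is isolated in `S`: the continuous map `u ↦ e u e` sends the dense copy of
`G(T)` into the closed set `{u | u (k,k,m+1) = u}` together with the point `e` outside it, so its
fibre over `e` is open, and that fibre meets `G(T)` only in the finitely many `(k,k,m')` with
`m' ≤ m`. The set of the `e_k` is also closed: an accumulation point `x` outside it would be
annihilated by every `e_k`, hence `x² = 0`, while `x²` lies in the closure of the `e_k² = e_k`,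
which avoids the neighbourhood `U` of `0`. A closed set of isolated points is clopen with clopen
singletons, so CLP-compactness makes it finite, a contradiction. -/

open Set

section Topology

variable {X Y α : Type*} [TopologicalSpace X] [TopologicalSpace Y]

theorem isOpen_preimage_singleton_of_denseRange [T1Space Y] {f : X → Y} (hf : Continuous f)
    {ι : α → X} (hι : DenseRange ι) {E : Set Y} (hE : IsClosed E) {y : Y} (hy : y ∉ E)
    (h : ∀ a, f (ι a) ∈ E ∪ {y}) : IsOpen (f ⁻¹' {y}) := by
  have hfx : ∀ x, f x ∈ E ∪ {y} := fun x =>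
    hι.induction_on x ((hE.union isClosed_singleton).preimage hf) h
  have hpre : f ⁻¹' {y} = (f ⁻¹' E)ᶜ := by
    ext x
    constructor
    · rintro hx hxE
      exact hy (hx ▸ hxE)
    · exact (hfx x).resolve_left
  rw [hpre]
  exact (hE.preimage hf).isOpen_compl

theorem DenseRange.finite_of_isOpen [T1Space X] {ι : α → X} (hι : DenseRange ι) {C : Set X}
    (hC : IsOpen C) (hfin : (ι ⁻¹' C).Finite) : C.Finite := by
  have hCι : (C ∩ range ι).Finite := image_preimage_eq_inter_range ▸ hfin.image ι
  exact hCι.subset ((hι.open_subset_closure_inter hC).trans hCι.isClosed.closure_subset)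

theorem GISPaper.CLPCompact.finite_of_isClosed_of_isOpen_singleton [T1Space X] (hX : CLPCompact X)
    {A : Set X} (hA : IsClosed A) (hiso : ∀ a ∈ A, IsOpen {a}) : A.Finite := by
  have hAopen : IsOpen A := by
    rw [← biUnion_of_singleton A]
    exact isOpen_biUnion hiso
  obtain ⟨ℱ, hℱ, hfin, hcov⟩ := hX (insert Aᶜ ((fun a => {a}) '' A))
    (by
      rintro _ (rfl | ⟨a, ha, rfl⟩)
      exacts [⟨hAopen.isClosed_compl, hA.isOpen_compl⟩, ⟨isClosed_singleton, hiso a ha⟩])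
    (by
      refine eq_univ_of_forall fun x => ?_
      by_cases hx : x ∈ A
      exacts [⟨{x}, mem_insert_of_mem _ ⟨x, hx, rfl⟩, rfl⟩, ⟨Aᶜ, mem_insert _ _, hx⟩])
  refine (hfin.preimage singleton_injective.injOn).subset fun a ha => ?_
  obtain ⟨F, hF, haF⟩ := (hcov ▸ mem_univ a : a ∈ ⋃₀ ℱ)
  rcases hℱ hF with rfl | ⟨b, -, rfl⟩
  · exact absurd ha haF
  · rwa [mem_singleton_iff.mp haF]

end Topology

section TopologicalMagma

variable {S : Type*} [TopologicalSpace S] [Mul S] [ContinuousMul S]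

theorem isClosed_range_of_orthogonal_idempotents [T1Space S] {κ : Type*} {s : κ → S} {z : S}
    (hidem : ∀ i, s i * s i = s i) (horth : ∀ i j, i ≠ j → s i * s j = z)
    (hz : z ∉ closure (range s)) : IsClosed (range s) := by
  refine isClosed_of_closure_subset fun x hx => ?_
  by_contra hxs
  have hleft : ∀ i, s i * x = z := fun i => by
    have hx' : x ∈ closure (range s \ {s i}) :=
      mem_closure_of_mem_closure_union (by rwa [union_sdiff_self, singleton_union,
        insert_eq_of_mem (mem_range_self i)])
        (compl_singleton_mem_nhds fun h => hxs (h ▸ mem_range_self i))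
    have := map_mem_closure (continuous_const_mul (s i)) hx'
      (t := {z}) (by rintro _ ⟨⟨j, rfl⟩, hj⟩; exact horth i j (fun h => hj (h ▸ rfl)))
    rwa [closure_singleton] at this
  have hsq : x * x = z := by
    have := map_mem_closure (continuous_mul_const x) hx (t := {z})
      (by rintro _ ⟨j, rfl⟩; exact hleft j)
    rwa [closure_singleton] at this
  have := map_mem_closure (continuous_id.mul continuous_id) hx (t := range s)
    (by rintro _ ⟨j, rfl⟩; exact ⟨j, (hidem j).symm⟩)
  exact hz (hsq ▸ this)

theorem isOpen_singleton_of_sandwich [T2Space S] {M : Type*} [Mul M] (φ : M →ₙ* S)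
    (hφ : Function.Injective φ) (hdense : DenseRange φ) {e c : M} (he : e * e * e = e)
    (hec : e * c ≠ e) (hcases : ∀ x, e * x * e * c = e * x * e ∨ e * x * e = e)
    (hfin : {x | e * x * e = e}.Finite) : IsOpen {φ e} := by
  set f : S → S := fun u => φ e * u * φ e
  have hf : Continuous f := (continuous_const_mul _).mul continuous_const
  have hfφ : ∀ x, f (φ x) = φ (e * x * e) := fun x => by simp only [f, map_mul]
  have hC : IsOpen (f ⁻¹' {φ e}) := by
    refine isOpen_preimage_singleton_of_denseRange hf hdense (E := {u | u * φ c = u})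
      (isClosed_eq (continuous_mul_const _) continuous_id) (by simpa [← map_mul, hφ.eq_iff])
      fun x => ?_
    rw [hfφ]
    rcases hcases x with h | h
    exacts [Or.inl (by simp only [mem_ofPred_eq, ← map_mul, h]), Or.inr (congrArg φ h)]
  have hCfin : (f ⁻¹' {φ e}).Finite :=
    hdense.finite_of_isOpen hC (hfin.subset fun x hx => hφ ((hfφ x).symm.trans hx))
  exact isOpen_singleton_of_finite_mem_nhds _ (hC.mem_nhds (by simp [f, ← map_mul, he])) hCfin

end TopologicalMagma

namespace GISPaper.GT

/-- The idempotent `(k, k, k + d)`; indexing by the offset `d = m - k` makes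
`L_k^* = range (idem k)` without a side condition. -/
def idem (k d : ℕ) : GT :=
  (some ⟨(k, k, k + d), Nat.le_add_right k d, Nat.le_add_right k d⟩ : Option GTElem)

theorem idem_inj {k d k' d' : ℕ} : idem k d = idem k' d' ↔ k = k' ∧ d = d' := by
  refine ⟨fun h => ?_, fun ⟨hk, hd⟩ => hk ▸ hd ▸ rfl⟩
  have h' := congrArg Subtype.val (Option.some.inj h)
  simp only [Prod.mk.injEq] at h'
  omega

theorem zero_mul_s14 (x : GT) : (0 : GT) * x = 0 := rfl

theorem idem_mul_idem (k d d' : ℕ) : idem k d * idem k d' = idem k (max d d') := by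
  show GT.mul _ _ = _
  simp [GT.mul, idem, Nat.add_max_add_left]

theorem idem_mul_idem_of_ne {k k' : ℕ} (h : k ≠ k') (d d' : ℕ) : idem k d * idem k' d' = 0 := by
  show GT.mul _ _ = none
  simp [GT.mul, idem, h]

theorem Lstar_eq_range (k : ℕ) : Lstar k = range (idem k) := by
  ext x
  constructor
  · rintro ⟨⟨⟨n, k', m⟩, hn, -⟩, rfl, hnk : n = k, hk'k : k' = k⟩
    subst hnk hk'k
    exact ⟨m - k', congrArg some <|
      Subtype.ext (Prod.ext rfl (Prod.ext rfl (Nat.add_sub_cancel' hn)))⟩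
  · rintro ⟨d, rfl⟩
    exact ⟨_, rfl, rfl, rfl⟩

theorem mem_Lstar_of_idem_mul_mul_idem_ne_zero {k d : ℕ} {x : GT}
    (hx : idem k d * x * idem k d ≠ 0) : x ∈ Lstar k := by
  change Option GTElem at x
  rcases x with _ | ⟨⟨n, k', m⟩, hx'⟩
  · exact absurd rfl hx
  · change GT.mul (GT.mul (some _) (some _)) (some _) ≠ none at hx
    refine ⟨_, rfl, ?_, ?_⟩ <;> by_contra hne <;> simp only at hne <;> apply hx
    · simp [GT.mul, Ne.symm hne]
    · by_cases hkn : k = n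
      · subst hkn
        simp [GT.mul, hne]
      · simp [GT.mul, hkn]

variable {S : Type*} [TopologicalSpace S] [T2Space S] [Mul S] [ContinuousMul S]

theorem isOpen_singleton_idem (φ : GT →ₙ* S) (hφ : Function.Injective φ)
    (hdense : DenseRange φ) (k d : ℕ) : IsOpen {φ (idem k d)} := by
  refine isOpen_singleton_of_sandwich φ hφ hdense (c := idem k (d + 1)) ?_ ?_ ?_ ?_
  · simp [idem_mul_idem]
  · simp [idem_mul_idem, idem_inj]
  · intro x
    by_cases h0 : idem k d * x * idem k d = 0
    · exact Or.inl (by rw [h0, zero_mul_s14])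
    obtain ⟨d', rfl⟩ := Lstar_eq_range k ▸ mem_Lstar_of_idem_mul_mul_idem_ne_zero h0
    simp only [idem_mul_idem, idem_inj, true_and]
    omega
  · refine ((finite_Iic d).image (idem k)).subset fun x hx => ?_
    have h0 : idem k d * x * idem k d ≠ 0 := by
      rw [mem_ofPred_eq.mp hx]
      exact Option.some_ne_none _
    obtain ⟨d', rfl⟩ := Lstar_eq_range k ▸ mem_Lstar_of_idem_mul_mul_idem_ne_zero h0
    simp only [mem_ofPred_eq, idem_mul_idem, idem_inj, true_and] at hx
    exact ⟨d', mem_Iic.mpr (by omega), rfl⟩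

end GISPaper.GT

open GISPaper in
theorem statement14_general {S : Type*} [TopologicalSpace S] [T2Space S] [Mul S]
    (hSmul : Continuous (fun p : S × S => p.1 * p.2))
    (hCLP : CLPCompact S)
    (ι : GT → S) (hinj : Function.Injective ι)
    (hhom : ∀ x y : GT, ι (x * y) = ι x * ι y)
    (hdense : DenseRange ι) :
    ∀ U : Set S, IsOpen U → ι 0 ∈ U →
      ∃ n : ℕ, ∀ k : ℕ, k > n → ι '' L k ⊆ U := by
  have : ContinuousMul S := ⟨hSmul⟩
  intro U hU hU0
  by_contra! hcon
  set K := {k | ∃ d, ι (GT.idem k d) ∉ U}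
  have hK : K.Infinite := infinite_of_forall_exists_gt fun n => by
    obtain ⟨k, hk, hkU⟩ := hcon n
    simp only [L, GT.Lstar_eq_range, image_insert_eq, insert_subset_iff, ← range_comp,
      range_subset_iff, hU0, true_and, not_forall] at hkU
    exact ⟨k, hkU, hk⟩
  choose d hd using fun k : K => k.2
  set s : K → S := fun k => ι (GT.idem k (d k))
  have hs : Function.Injective s := fun k k' h => Subtype.ext (GT.idem_inj.mp (hinj h)).1
  have hclosed : IsClosed (range s) := isClosed_range_of_orthogonal_idempotents (z := ι 0)
    (fun k => by simp only [s, ← hhom, GT.idem_mul_idem, max_self])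
    (fun k k' hne => by rw [← hhom, GT.idem_mul_idem_of_ne (Subtype.coe_ne_coe.mpr hne)])
    (fun h => closure_minimal (range_subset_iff.mpr hd) hU.isClosed_compl h hU0)
  have hfin := hCLP.finite_of_isClosed_of_isOpen_singleton hclosed <| by
    rintro _ ⟨k, rfl⟩
    exact GT.isOpen_singleton_idem ⟨ι, hhom⟩ hinj hdense _ _
  exact hK (finite_coe_iff.mp ((finite_range_iff hs).mp hfin))

open GISPaper in
/-- Let `G(T)` be a dense subsemigroup of a Hausdorff CLP-compact
topological semigroup `S`. Then for every open neighborhood `U` of `0` in `S` there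
is `n` such that `L_k ⊆ U` for every `k > n`. -/
theorem statement14 {S : Type*} [TopologicalSpace S] [T2Space S] [Mul S]
    (hassoc : ∀ a b c : S, a * b * c = a * (b * c))
    (hSmul : Continuous (fun p : S × S => p.1 * p.2))
    (hCLP : CLPCompact S)
    (ι : GT → S) (hinj : Function.Injective ι)
    (hhom : ∀ x y : GT, ι (x * y) = ι x * ι y)
    (hdense : DenseRange ι) :
    ∀ U : Set S, IsOpen U → ι 0 ∈ U →
      ∃ n : ℕ, ∀ k : ℕ, k > n → ι '' L k ⊆ U :=
  statement14_general hSmul hCLP ι hinj hhom hdense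
end

section
/- If G(T) is a dense subsemigroup of a Hausdorff CLP-compact topological semigroup S, then S = G(T) and the topology of S is τ_c; in particular S is compact. Conversely, G(T) endowed with τ_c is a compact Hausdorff topological semigroup (so G(T) embeds densely into a CLP-compact topological semigroup if and only if G(T) is compact in τ_c). -/
open Filter Set Topology

theorem MapClusterPt.prodMk_of_tendsto {α X Y : Type*} [TopologicalSpace X] [TopologicalSpace Y]
    {l : Filter α} {f : α → X} {g : α → Y} {x : X} {y : Y} (hf : MapClusterPt x l f)
    (hg : Tendsto g l (𝓝 y)) : MapClusterPt (x, y) l fun a => (f a, g a) := by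
  rw [((𝓝 x).basis_sets.prod_nhds (𝓝 y).basis_sets).mapClusterPt_iff_frequently]
  rintro ⟨s, t⟩ ⟨hs, ht⟩
  exact (mapClusterPt_iff_frequently.1 hf s hs).and_eventually (hg ht)

theorem tendsto_cofinite_nhds_of_mapClusterPt {α X : Type*} [TopologicalSpace X] {f : α → X}
    {x : X} (h : ∀ I : Set α, I.Infinite → (∀ a ∈ I, f a ≠ x) →
      MapClusterPt x cofinite fun a : I => f a) :
    Tendsto f cofinite (𝓝 x) := by
  intro U hU
  rw [mem_map, mem_cofinite]
  by_contra hI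
  change (f ⁻¹' U)ᶜ.Infinite at hI
  have := hI.to_subtype
  have hne : ∀ a ∈ (f ⁻¹' U)ᶜ, f a ≠ x := fun a ha hax =>
    ha (by rw [mem_preimage, hax]; exact mem_of_mem_nhds hU)
  obtain ⟨a, ha⟩ := ((h _ hI hne).frequently hU).exists
  exact a.2 ha

theorem DenseRange.infinite_preimage_nhds {α X : Type*} [TopologicalSpace X] [T1Space X]
    {ι : α → X} (hι : DenseRange ι) {x : X} (hx : ¬IsOpen {x}) {U : Set X}
    (hU : U ∈ 𝓝 x) : (ι ⁻¹' U).Infinite := by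
  intro hfin
  obtain ⟨V, hVU, hV, hxV⟩ := mem_nhds_iff.1 hU
  have hVfin : (V ∩ range ι).Finite := (hfin.image ι).subset fun y ⟨hyV, g, hg⟩ =>
    ⟨g, by rw [mem_preimage, hg]; exact hVU hyV, hg⟩
  exact hx (isOpen_singleton_of_finite_mem_nhds x (hV.mem_nhds hxV) (hVfin.subset
    ((Dense.open_subset_closure_inter hι hV).trans hVfin.isClosed.closure_subset)))

namespace GISPaper

section CLPCompact

variable {X : Type*} [TopologicalSpace X] [T1Space X]

theorem CLPCompact.finite_of_isClopen (hX : CLPCompact X) {A : Set X} (hA : IsClopen A)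
    (hiso : ∀ a ∈ A, IsOpen {a}) : A.Finite := by
  obtain ⟨ℱ, hℱ, hfin, hcov⟩ := hX (insert Aᶜ ((fun a => {a}) '' A))
    (by
      rintro U (rfl | ⟨a, ha, rfl⟩)
      · exact hA.compl
      · exact ⟨isClosed_singleton, hiso a ha⟩)
    (eq_univ_of_forall fun x => by
      by_cases hx : x ∈ A
      · exact ⟨{x}, mem_insert_of_mem _ ⟨x, hx, rfl⟩, rfl⟩
      · exact ⟨Aᶜ, mem_insert _ _, hx⟩)
  refine ((hfin.sdiff (t := {Aᶜ})).sUnion fun U hU => ?_).subset fun a ha => ?_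
  · rcases hℱ hU.1 with rfl | ⟨b, -, rfl⟩
    · exact absurd rfl hU.2
    · exact finite_singleton b
  · obtain ⟨U, hUℱ, haU⟩ : a ∈ ⋃₀ ℱ := hcov ▸ mem_univ a
    exact ⟨U, ⟨hUℱ, by rintro rfl; exact haU ha⟩, haU⟩

theorem CLPCompact.exists_mapClusterPt (hX : CLPCompact X) {α : Type*} [Infinite α]
    {f : α → X} (hf : Tendsto f cofinite cofinite) (hiso : ∀ a, IsOpen {f a}) :
    ∃ z, MapClusterPt z cofinite f := by
  by_contra! hno
  have hlf : LocallyFinite fun a => ({f a} : Set X) := fun z => by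
    obtain ⟨U, hU, hfin⟩ : ∃ U ∈ 𝓝 z, {a | f a ∈ U}.Finite := by
      simpa [mapClusterPt_iff_frequently, frequently_cofinite_iff_infinite] using hno z
    exact ⟨U, hU, by simpa using hfin⟩
  have hclopen : IsClopen (range f) := by
    rw [← iUnion_singleton_eq_range]
    exact ⟨hlf.isClosed_iUnion fun _ => isClosed_singleton, isOpen_iUnion hiso⟩
  have hfin := hX.finite_of_isClopen hclopen (by rintro _ ⟨a, rfl⟩; exact hiso a)
  exact infinite_univ (by simpa using mem_cofinite.1 (hf hfin.compl_mem_cofinite))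

end CLPCompact

namespace GT

def mk (n k m : ℕ) (hn : n ≤ m := by omega) (hk : k ≤ m := by omega) : GT :=
  some ⟨(n, k, m), hn, hk⟩

def height : GT → ℕ
  | none => 0
  | some p => p.1.2.2

@[elab_as_elim]
theorem induction {P : GT → Prop} (zero : P 0)
    (mk : ∀ n k m (hn : n ≤ m) (hk : k ≤ m), P (mk n k m)) : ∀ x, P x
  | none => zero
  | some ⟨(n, k, m), hn, hk⟩ => mk n k m hn hk

variable {a b c d n k m m' p q : ℕ}

theorem mk_ne_zero {hn : n ≤ m} {hk : k ≤ m} : mk n k m ≠ 0 := Option.some_ne_none _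

@[simp]
theorem mk_inj {n' k' : ℕ} {hn : n ≤ m} {hk : k ≤ m} {hn' : n' ≤ m'} {hk' : k' ≤ m'} :
    mk n k m = mk n' k' m' ↔ n = n' ∧ k = k' ∧ m = m' := by
  refine ⟨fun h => ?_, by rintro ⟨rfl, rfl, rfl⟩; rfl⟩
  simpa using congrArg Subtype.val (Option.some.inj h)

@[simp]
theorem height_mk {hn : n ≤ m} {hk : k ≤ m} : (mk n k m).height = m := rfl

theorem mk_mul_mk (ha : a ≤ m) (hb : b ≤ m) (hc : c ≤ m') (hd : d ≤ m') :
    mk a b m * mk c d m' = if b = c then mk a d (max m m') else 0 := rfl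

theorem mk_mul_mk_self (ha : a ≤ m) (hb : b ≤ m) (hb' : b ≤ m') (hd : d ≤ m') :
    mk a b m * mk b d m' = mk a d (max m m') := by
  rw [mk_mul_mk, if_pos rfl]

instance : MulZeroClass GT where
  zero_mul _ := rfl
  mul_zero x := by cases x <;> rfl

theorem height_le_height_mul {x y : GT} (h : x * y ≠ 0) :
    x.height ≤ (x * y).height ∧ y.height ≤ (x * y).height := by
  induction x using GT.induction with
  | zero => exact absurd (zero_mul y) h
  | mk n k m hn hk =>
    induction y using GT.induction with
    | zero => exact absurd (mul_zero _) h
    | mk k' l m' hk' hl =>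
      rw [mk_mul_mk] at h ⊢
      split_ifs at h ⊢
      · simp only [height_mk]
        omega
      · exact absurd rfl h

theorem finite_height_le (M : ℕ) : {x : GT | x.height ≤ M}.Finite := by
  have hbox := (finite_Iic M).prod ((finite_Iic M).prod (finite_Iic M))
  let ofTriple (t : ℕ × ℕ × ℕ) : GT :=
    if h : t.1 ≤ t.2.2 ∧ t.2.1 ≤ t.2.2 then mk t.1 t.2.1 t.2.2 h.1 h.2 else 0
  refine ((hbox.image ofTriple).insert 0).subset fun x hx => ?_
  induction x using GT.induction with
  | zero => exact mem_insert _ _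
  | mk n k m hn hk =>
    replace hx : m ≤ M := hx
    exact mem_insert_of_mem _
      ⟨(n, k, m), ⟨hn.trans hx, hk.trans hx, hx⟩, dif_pos ⟨hn, hk⟩⟩

theorem tendsto_height : Tendsto height cofinite cofinite :=
  Tendsto.cofinite_of_finite_preimage_singleton fun b =>
    ((finite_height_le b).subset fun _ (hx : _ = b) => hx.le).to_subtype

theorem finite_mul_eq {c : GT} (hc : c ≠ 0) : {p : GT × GT | p.1 * p.2 = c}.Finite := by
  refine ((finite_height_le c.height).prod (finite_height_le c.height)).subset ?_
  rintro ⟨x, y⟩ rfl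
  exact height_le_height_mul hc

def diag (q : ℕ) : GT := mk q q q

theorem diag_ne_zero : diag q ≠ 0 := mk_ne_zero

theorem diag_injective : Function.Injective diag := fun p q h => by
  simpa [diag] using h

theorem diag_mul_self : diag q * diag q = diag q := by
  simp [diag, mk_mul_mk_self]

theorem diag_mul_diag_of_ne (h : p ≠ q) : diag p * diag q = 0 := by
  rw [diag, diag, mk_mul_mk, if_neg h]

def row : GT → GT
  | none => 0
  | some p => mk p.1.1 p.1.2.2 p.1.2.2 p.2.1 le_rfl

def col : GT → GT
  | none => 0
  | some p => mk p.1.2.2 p.1.2.1 p.1.2.2 le_rfl p.2.2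

theorem row_mul_col (x : GT) : row x * col x = x := by
  induction x using GT.induction with
  | zero => rfl
  | mk n k m hn hk =>
    change mk n m m * mk m k m = mk n k m
    simp [mk_mul_mk_self]

theorem row_mul_diag (x : GT) : row x * diag x.height = row x := by
  induction x using GT.induction with
  | zero => rfl
  | mk n k m hn hk =>
    change mk n m m * mk m m m = mk n m m
    simp [mk_mul_mk_self]

theorem diag_mul_col (x : GT) : diag x.height * col x = col x := by
  induction x using GT.induction with
  | zero => exact mul_zero _
  | mk n k m hn hk =>
    change mk m m m * mk m k m = mk m k m
    simp [mk_mul_mk_self]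

theorem height_comp_row : height ∘ row = height :=
  funext fun x => by induction x using GT.induction <;> rfl

theorem height_comp_col : height ∘ col = height :=
  funext fun x => by induction x using GT.induction <;> rfl

theorem tendsto_row : Tendsto row cofinite cofinite :=
  .of_tendsto_comp (height_comp_row ▸ tendsto_height) (comap_cofinite_le _)

theorem tendsto_col : Tendsto col cofinite cofinite :=
  .of_tendsto_comp (height_comp_col ▸ tendsto_height) (comap_cofinite_le _)

def chainAbove (n k m : ℕ) : Set GT :=
  {g | ∃ p, ∃ (hnp : n ≤ p) (hkp : k ≤ p), m < p ∧ g = mk n k p}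

theorem mk_mul_mk_mul_mk (hn : n ≤ p) (hk : k ≤ p) (hn' : n ≤ q) (hk' : k ≤ q) :
    mk n k p * mk k n q * mk n k p = mk n k (max p q) := by
  rw [mk_mul_mk_self, mk_mul_mk_self, mk_inj]
  omega

theorem exists_eq_mk_of_mul_mk_mul_ne_zero {g : GT} (hn : n ≤ q) (hk : k ≤ q)
    (h : g * mk k n q * g ≠ 0) : ∃ p, ∃ (hnp : n ≤ p) (hkp : k ≤ p), g = mk n k p := by
  induction g using GT.induction with
  | zero => exact absurd rfl h
  | mk n' k' p hn' hk' =>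
    rw [mk_mul_mk] at h
    split_ifs at h with h₁
    · rw [mk_mul_mk] at h
      split_ifs at h with h₂
      · subst h₁ h₂
        exact ⟨p, hn', hk', rfl⟩
      · exact absurd rfl h
    · exact absurd rfl h

end GT

open GISPaper.GT

section TauC

attribute [local instance] tauC

variable {α : Type*} [Zero α]

theorem isOpen_singleton_tauC {x : α} (hx : x ≠ 0) : IsOpen {x} :=
  fun h0 => absurd (mem_singleton_iff.1 h0).symm hx

theorem t2Space_tauC : T2Space α := by
  refine t2Space_iff _ |>.2 fun x y hxy => ?_
  have hcompl : ∀ z : α, IsOpen {z}ᶜ := fun z _ => by simp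
  by_cases hy : y = 0
  · exact ⟨{x}, {x}ᶜ, isOpen_singleton_tauC (hy ▸ hxy), hcompl x, rfl, Ne.symm hxy,
      disjoint_compl_right⟩
  · exact ⟨{y}ᶜ, {y}, hcompl y, isOpen_singleton_tauC hy, hxy, rfl, disjoint_compl_left⟩

theorem compactSpace_tauC : CompactSpace α := by
  refine ⟨isCompact_iff_ultrafilter_le_nhds.2 fun 𝒰 _ => ?_⟩
  by_cases h0 : ↑𝒰 ≤ 𝓝 (0 : α)
  · exact ⟨0, mem_univ _, h0⟩
  obtain ⟨U, hU, hU𝒰⟩ := Filter.not_le.1 h0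
  obtain ⟨V, hVU, hV, h0V⟩ := mem_nhds_iff.1 hU
  obtain ⟨x, -, hx⟩ := 𝒰.eq_pure_of_finite_mem (hV h0V)
    (𝒰.compl_mem_iff_notMem.2 fun hV𝒰 => hU𝒰 (mem_of_superset hV𝒰 hVU))
  exact ⟨x, mem_univ x, hx ▸ pure_le_nhds x⟩

theorem continuous_tauC_of_tendsto {X : Type*} [TopologicalSpace X] {f : α → X}
    (hf : Tendsto f cofinite (𝓝 (f 0))) : Continuous f :=
  continuous_def.2 fun _ hV h0 => mem_cofinite.1 (hf (hV.mem_nhds h0))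

theorem continuous_mul_tauC {M : Type*} [MulZeroClass M]
    (hfin : ∀ c : M, c ≠ 0 → {p : M × M | p.1 * p.2 = c}.Finite) :
    Continuous fun p : M × M => p.1 * p.2 := by
  have := t2Space_tauC (α := M)
  refine continuous_def.2 fun W hW => ?_
  by_cases h0 : (0 : M) ∈ W
  · have hfin' : ((fun p : M × M => p.1 * p.2) ⁻¹' Wᶜ).Finite := by
      rw [← biUnion_preimage_singleton]
      exact (hW h0).biUnion fun c hc => hfin c (ne_of_mem_of_not_mem h0 hc).symm
    simpa using hfin'.isClosed.isOpen_compl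
  · refine isOpen_iff_forall_mem_open.2 fun p hp => ⟨{p}, singleton_subset_iff.2 hp, ?_, rfl⟩
    have hp0 : p.1 * p.2 ≠ 0 := fun h => h0 (h ▸ hp)
    rw [← Prod.mk.eta (p := p), ← singleton_prod_singleton]
    exact (isOpen_singleton_tauC (left_ne_zero_of_mul hp0)).prod
      (isOpen_singleton_tauC (right_ne_zero_of_mul hp0))

end TauC

structure IsDenseSubsemigroup_s15 {S : Type*} [TopologicalSpace S] (mulS : S → S → S)
    (ι : GT → S) : Prop where
  continuous_mul : Continuous fun p : S × S => mulS p.1 p.2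
  injective : Function.Injective ι
  map_mul : ∀ x y, ι (x * y) = mulS (ι x) (ι y)
  denseRange : DenseRange ι

namespace IsDenseSubsemigroup_s15

variable {S : Type*} [TopologicalSpace S] {mulS : S → S → S} {ι : GT → S}

theorem mul_map_zero [T2Space S] (h : IsDenseSubsemigroup_s15 mulS ι) (s : S) :
    mulS s (ι 0) = ι 0 :=
  congrFun (h.denseRange.equalizer (h.continuous_mul.comp (continuous_id.prodMk continuous_const))
    continuous_const (funext fun x => by simp [← h.map_mul])) s

theorem map_zero_mul [T2Space S] (h : IsDenseSubsemigroup_s15 mulS ι) (s : S) :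
    mulS (ι 0) s = ι 0 :=
  congrFun (h.denseRange.equalizer (h.continuous_mul.comp (continuous_const.prodMk continuous_id))
    continuous_const (funext fun x => by simp [← h.map_mul])) s

theorem continuous_mul_const_mul (h : IsDenseSubsemigroup_s15 mulS ι) (b : S) :
    Continuous fun s => mulS (mulS s b) s :=
  h.continuous_mul.comp
    ((h.continuous_mul.comp (continuous_id.prodMk continuous_const)).prodMk continuous_id)

theorem map_mk_mul_mk_mul_mk (h : IsDenseSubsemigroup_s15 mulS ι) {n k p q : ℕ} (hn : n ≤ p)
    (hk : k ≤ p) (hn' : n ≤ q) (hk' : k ≤ q) :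
    mulS (mulS (ι (GT.mk n k p)) (ι (GT.mk k n q))) (ι (GT.mk n k p)) =
      ι (GT.mk n k (max p q)) := by
  rw [← h.map_mul, ← h.map_mul, mk_mul_mk_mul_mk]

theorem mem_closure_image_chainAbove [T2Space S] (h : IsDenseSubsemigroup_s15 mulS ι) {n k m : ℕ}
    (hn : n ≤ m) (hk : k ≤ m) (hiso : ¬IsOpen {ι (GT.mk n k m)}) :
    ι (GT.mk n k m) ∈ closure (ι '' chainAbove n k m) := by
  rw [mem_closure_iff_nhds]
  intro U hU
  have hN : U ∩ (fun s => mulS (mulS s (ι (GT.mk k n m))) s) ⁻¹' {ι 0}ᶜ ∈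
      𝓝 (ι (GT.mk n k m)) := by
    refine inter_mem hU ((h.continuous_mul_const_mul _).continuousAt.preimage_mem_nhds
      (isOpen_compl_singleton.mem_nhds ?_))
    simp [h.map_mk_mul_mk_mul_mk, h.injective.eq_iff, mk_ne_zero]
  obtain ⟨g, ⟨hgU, hg0⟩, hgm⟩ :=
    ((h.denseRange.infinite_preimage_nhds hiso hN).sdiff (finite_height_le m)).nonempty
  have hg0' : g * GT.mk k n m * g ≠ 0 := fun h0 => hg0 (by simp [← h.map_mul, h0])
  obtain ⟨p, hnp, hkp, rfl⟩ := exists_eq_mk_of_mul_mk_mul_ne_zero hn hk hg0'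
  exact ⟨_, hgU, _, ⟨p, hnp, hkp, by simpa using hgm, rfl⟩, rfl⟩

theorem isOpen_singleton_s15 [T2Space S] (h : IsDenseSubsemigroup_s15 mulS ι) {x : GT} (hx : x ≠ 0) :
    IsOpen {ι x} := by
  induction x using GT.induction with
  | zero => exact absurd rfl hx
  | mk n k m hn hk =>
    by_contra hiso
    have heq : EqOn (fun s => mulS (mulS s (ι (GT.mk k n m))) s)
        (fun s => mulS (mulS s (ι (GT.mk k n (m + 1)))) s)
        (ι '' chainAbove n k m) := by
      rintro _ ⟨_, ⟨p, hnp, hkp, hmp, rfl⟩, rfl⟩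
      simp only [h.map_mk_mul_mk_mul_mk, h.injective.eq_iff, mk_inj, true_and]
      omega
    have := heq.closure (h.continuous_mul_const_mul _) (h.continuous_mul_const_mul _)
      (h.mem_closure_image_chainAbove hn hk hiso)
    simp [h.map_mk_mul_mk_mul_mk, h.injective.eq_iff] at this

theorem tendsto_map_diag [T2Space S] (h : IsDenseSubsemigroup_s15 mulS ι) (hS : CLPCompact S) :
    Tendsto (fun q => ι (diag q)) cofinite (𝓝 (ι 0)) := by
  refine tendsto_cofinite_nhds_of_mapClusterPt fun I hI _ => ?_
  have := hI.to_subtype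
  obtain ⟨z, hz⟩ := hS.exists_mapClusterPt (f := fun q : I => ι (diag q))
    ((h.injective.comp diag_injective).tendsto_cofinite.comp
      Subtype.val_injective.tendsto_cofinite)
    fun _ => h.isOpen_singleton_s15 diag_ne_zero
  have hzz : mulS z z = ι 0 := by
    refine isClosed_singleton.mem_of_mapClusterPt
      ((hz.curry_prodMap hz).continuousAt_comp (f := fun p : S × S => mulS p.1 p.2)
        h.continuous_mul.continuousAt) ?_
    refine eventually_curry_iff.2 (Eventually.of_forall fun p => ?_)
    filter_upwards [eventually_cofinite_ne p] with q hpq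
    simp [← h.map_mul, diag_mul_diag_of_ne (Subtype.val_injective.ne hpq.symm)]
  simpa [Function.comp_def, hzz, ← h.map_mul, diag_mul_self] using
    hz.continuousAt_comp (h.continuous_mul.comp (continuous_id.prodMk continuous_id)).continuousAt

theorem tendsto_map_of_absorbed_by_diag [T2Space S] (h : IsDenseSubsemigroup_s15 mulS ι)
    (hS : CLPCompact S) {F : S → S → S} (hF : Continuous (Function.uncurry F))
    (hF0 : ∀ s, F s (ι 0) = ι 0)
    {α : Type*} {f : α → GT} {e : α → ℕ} (hf : Tendsto f cofinite cofinite)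
    (he : Tendsto e cofinite cofinite) (hfe : ∀ a, F (ι (f a)) (ι (diag (e a))) = ι (f a)) :
    Tendsto (fun a => ι (f a)) cofinite (𝓝 (ι 0)) := by
  refine tendsto_cofinite_nhds_of_mapClusterPt fun I hI hI0 => ?_
  have := hI.to_subtype
  have hval : Tendsto ((↑) : I → α) cofinite cofinite := Subtype.val_injective.tendsto_cofinite
  obtain ⟨z, hz⟩ := hS.exists_mapClusterPt (f := fun a : I => ι (f a))
    (h.injective.tendsto_cofinite.comp (hf.comp hval))
    fun a => h.isOpen_singleton_s15 fun h0 => hI0 a a.2 (by rw [h0])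
  simpa [Function.comp_def, hF0, hfe] using (hz.prodMk_of_tendsto
    ((h.tendsto_map_diag hS).comp (he.comp hval))).continuousAt_comp hF.continuousAt

theorem tendsto_cofinite [T2Space S] (h : IsDenseSubsemigroup_s15 mulS ι) (hS : CLPCompact S) :
    Tendsto ι cofinite (𝓝 (ι 0)) := by
  have hrow := h.tendsto_map_of_absorbed_by_diag hS h.continuous_mul h.mul_map_zero tendsto_row
    tendsto_height fun x => by rw [← h.map_mul, row_mul_diag]
  have hcol := h.tendsto_map_of_absorbed_by_diag hS (F := fun s t => mulS t s)
    (h.continuous_mul.comp continuous_swap) h.map_zero_mul tendsto_col tendsto_height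
    fun x => by rw [← h.map_mul, diag_mul_col]
  simpa [Function.comp_def, ← h.map_mul, row_mul_col] using
    (h.continuous_mul.tendsto (ι 0, ι 0)).comp (hrow.prodMk_nhds hcol)

section TauC

attribute [local instance] tauC

theorem isClosedEmbedding [T2Space S] (h : IsDenseSubsemigroup_s15 mulS ι) (hS : CLPCompact S) :
    IsClosedEmbedding ι :=
  have := compactSpace_tauC (α := GT)
  (continuous_tauC_of_tendsto (h.tendsto_cofinite hS)).isClosedEmbedding h.injective

theorem surjective [T2Space S] (h : IsDenseSubsemigroup_s15 mulS ι) (hS : CLPCompact S) :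
    Function.Surjective ι :=
  range_eq_univ.1 <|
    (h.isClosedEmbedding hS).isClosed_range.closure_eq ▸ h.denseRange.closure_range

theorem induced_eq_tauC [T2Space S] (h : IsDenseSubsemigroup_s15 mulS ι) (hS : CLPCompact S) :
    TopologicalSpace.induced ι ‹_› = tauC GT :=
  (h.isClosedEmbedding hS).eq_induced.symm

theorem compactSpace [T2Space S] (h : IsDenseSubsemigroup_s15 mulS ι) (hS : CLPCompact S) :
    CompactSpace S :=
  have := compactSpace_tauC (α := GT)
  isCompact_univ_iff.1 <|
    (h.surjective hS).range_eq ▸ isCompact_range (h.isClosedEmbedding hS).continuous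

end TauC

end IsDenseSubsemigroup_s15

end GISPaper

open GISPaper in
/-- If `G(T)` is a dense subsemigroup of a Hausdorff CLP-compact
topological semigroup `S`, then `S = G(T)` with the topology `τ_c` (the dense
embedding is onto and induces `τ_c`), and `S` is compact. Conversely, `(G(T), τ_c)`
is a compact Hausdorff topological semigroup. -/
theorem statement15 :
    (∀ (S : Type u) (tS : TopologicalSpace S) (mulS : S → S → S),
      (∀ a b c : S, mulS (mulS a b) c = mulS a (mulS b c)) →
      @T2Space S tS →
      @Continuous _ _ (@instTopologicalSpaceProd S S tS tS) tS
        (fun p : S × S => mulS p.1 p.2) →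
      @CLPCompact S tS →
      ∀ ι : GT → S, Function.Injective ι →
        (∀ x y : GT, ι (x * y) = mulS (ι x) (ι y)) →
        @DenseRange S tS _ ι →
        Function.Surjective ι ∧
        TopologicalSpace.induced ι tS = tauC GT ∧
        @CompactSpace S tS) ∧
    (@CompactSpace GT (tauC GT) ∧ @T2Space GT (tauC GT) ∧
      @Continuous _ _ (@instTopologicalSpaceProd GT GT (tauC GT) (tauC GT)) (tauC GT)
        (fun p : GT × GT => p.1 * p.2)) := by
  refine ⟨fun S tS mulS _ _ hmul hS ι hinj hhom hdense => ?_,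
    compactSpace_tauC, t2Space_tauC, continuous_mul_tauC fun _ => GT.finite_mul_eq⟩
  have h : IsDenseSubsemigroup_s15 mulS ι := ⟨hmul, hinj, hhom, hdense⟩
  exact ⟨h.surjective hS, h.induced_eq_tauC hS, h.compactSpace hS⟩
end
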